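/- arXiv:2101.01945 — 6 statements merged into one kernel-verified Lean document; each statement's English description precedes it below -/
import Mathlib

section
/- Let A and B be Boolean n×n matrices. Define a graph database D over alphabet {a} with node set {(i,0),(i,1),(i,2) : i ∈ [n]} and edges (i,0) →ᵃ (j,1) whenever A[i,j] = 1, and (i,1) →ᵃ (j,2) whenever B[i,j] = 1. Let q be the query asking for pairs of nodes connected by a path labelled 'aa'. Then q(D) ⊆ {((i,0),(j,2)) : i,j ∈ [n]}, and for all i,j ∈ [n], ((i,0),(j,2)) ∈ q(D) if and only if (A×B)[i,j] = 1, where × denotes Boolean matrix product. -/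
/-- Paths in a graph database, recording the label word. -/
inductive DBPath {V σ : Type*} (E : V → σ → V → Prop) : V → List σ → V → Prop
  | nil (u : V) : DBPath E u [] u
  | cons {u v w : V} {a : σ} {l : List σ} :
      E u a v → DBPath E v l w → DBPath E u (a :: l) w

/-- RPQ evaluation: `(u,v)` is in the result iff some path from `u` to `v` is labelled
by a word of the language `L`. -/
def qEval {V σ : Type*} (E : V → σ → V → Prop) (L : List σ → Prop) (u v : V) : Prop :=
  ∃ w, L w ∧ DBPath E u w v

/-- The BMM-to-RPQ reduction: with the three-layer graph database built from Boolean
matrices `A, B` and the query `q = aa`, the result `q(D)` consists exactly of the pairs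
`((i,0),(j,2))` with `(A × B)[i,j] = 1`. -/
theorem bmm_reduction {n : ℕ} (A B : Fin n → Fin n → Bool) :
    let E : Fin n × Fin 3 → Unit → Fin n × Fin 3 → Prop := fun x _ y =>
      (∃ i j : Fin n, A i j = true ∧ x = (i, 0) ∧ y = (j, 1)) ∨
      (∃ i j : Fin n, B i j = true ∧ x = (i, 1) ∧ y = (j, 2))
    let L : List Unit → Prop := fun w => w = [(), ()]
    (∀ x y, qEval E L x y → ∃ i j : Fin n, x = (i, (0 : Fin 3)) ∧ y = (j, (2 : Fin 3))) ∧
    (∀ i j : Fin n, qEval E L (i, 0) (j, 2) ↔ ∃ k, A i k = true ∧ B k j = true) := by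
  intro E L
  have key : ∀ x y, qEval E L x y →
      ∃ i k j : Fin n, A i k = true ∧ B k j = true ∧ x = (i, (0 : Fin 3)) ∧ y = (j, (2 : Fin 3)) := by
    rintro x y ⟨w, hw, hp⟩
    have hw' : w = [(), ()] := hw
    subst hw'
    rcases hp with _ | ⟨e1, hp⟩
    rcases hp with _ | ⟨e2, hp⟩
    cases hp
    rcases e1 with ⟨i, k, hA, hx, hv⟩ | ⟨i, k, hB0, hx, hv⟩
    · subst hv
      rcases e2 with ⟨i', j, _, hv', _⟩ | ⟨k', j, hB, hv', hy⟩
      · simp [Prod.ext_iff] at hv'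
      · simp only [Prod.mk.injEq] at hv'
        exact ⟨i, k, j, hA, hv'.1 ▸ hB, hx, hy⟩
    · subst hv
      rcases e2 with ⟨i', j, _, hv', _⟩ | ⟨k', j, _, hv', _⟩ <;>
        simp [Prod.ext_iff] at hv'
  constructor
  · intro x y h
    obtain ⟨i, k, j, _, _, hx, hy⟩ := key x y h
    exact ⟨i, j, hx, hy⟩
  · intro i j
    constructor
    · intro h
      obtain ⟨i', k, j', hA, hB, hx, hy⟩ := key _ _ h
      simp only [Prod.mk.injEq] at hx hy
      exact ⟨k, hx.1 ▸ hA, hy.1 ▸ hB⟩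
    · rintro ⟨k, hA, hB⟩
      exact ⟨[(), ()], rfl,
        .cons (Or.inl ⟨i, k, hA, rfl, rfl⟩) (.cons (Or.inr ⟨k, j, hB, rfl, rfl⟩) (.nil _))⟩
end

section
/- Let A = {a¹,…,aⁿ} and B = {b¹,…,bⁿ} be sets of Boolean vectors of dimension d. Define the graph database D over Σ = {0,1,#} with nodes s, t, and v_{i,j} for i ∈ [n], j ∈ {0,…,d}; edges v_{i,j} →⁰ v_{i,j+1} for all i ∈ [n], 0 ≤ j ≤ d−1; edges v_{i,j} →¹ v_{i,j+1} whenever aⁱ[j+1] = 0; and edges s →# v_{i,0} and v_{i,d} →# t for all i ∈ [n]. Let q = #(w₁ | w₂ | … | w_n)# where w_i = bⁱ[1]bⁱ[2]…bⁱ[d]. Then there exist a ∈ A and b ∈ B that are orthogonal if and only if (s,t) ∈ q(D). -/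
/-- The alphabet {0, 1, #}. -/
inductive OVSym : Type
  | zero | one | hash

/-- Nodes of the OV graph database: `s`, `t` and `v i j` for `i ∈ [n]`, `0 ≤ j ≤ d`. -/
inductive OVNode (n d : ℕ) : Type
  | s | t
  | v (i : Fin n) (j : Fin (d + 1))

/-- Edges of the OV graph database built from the vectors `A`. -/
def ovEdge {n d : ℕ} (A : Fin n → Fin d → Bool) :
    OVNode n d → OVSym → OVNode n d → Prop := fun x c y =>
  (∃ (i : Fin n) (j : Fin d), c = OVSym.zero ∧ x = OVNode.v i j.castSucc ∧
      y = OVNode.v i j.succ) ∨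
  (∃ (i : Fin n) (j : Fin d), c = OVSym.one ∧ A i j = false ∧
      x = OVNode.v i j.castSucc ∧ y = OVNode.v i j.succ) ∨
  (∃ i : Fin n, c = OVSym.hash ∧ x = OVNode.s ∧ y = OVNode.v i 0) ∨
  (∃ i : Fin n, c = OVSym.hash ∧ x = OVNode.v i (Fin.last d) ∧ y = OVNode.t)

lemma DBPath.append {V σ : Type*} {E : V → σ → V → Prop} {u v w : V} {l1 l2 : List σ}
    (h1 : DBPath E u l1 v) (h2 : DBPath E v l2 w) : DBPath E u (l1 ++ l2) w := by
  induction h1 with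
  | nil => simpa
  | cons e _ ih => exact DBPath.cons e (ih h2)

lemma ov_fwd {n d : ℕ} (A : Fin n → Fin d → Bool) (i : Fin n) (f : Fin d → OVSym)
    (hf : ∀ k, f k = OVSym.zero ∨ (f k = OVSym.one ∧ A i k = false)) :
    ∀ j (hj : j ≤ d), DBPath (ovEdge A) (OVNode.v i ⟨j, Nat.lt_succ_of_le hj⟩)
      ((List.ofFn f).drop j) (OVNode.v i (Fin.last d))
  | j, hj => by
    rcases eq_or_lt_of_le hj with h | hlt
    · subst h
      rw [List.drop_eq_nil_of_le (by simp)]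
      have : (⟨j, Nat.lt_succ_of_le le_rfl⟩ : Fin (j+1)) = Fin.last j := rfl
      rw [this]
      exact DBPath.nil _
    · rw [List.drop_eq_getElem_cons (by simpa using hlt)]
      refine DBPath.cons (v := OVNode.v i ⟨j+1, Nat.succ_lt_succ hlt⟩) ?_
        (ov_fwd A i f hf (j+1) hlt)
      rcases hf ⟨j, hlt⟩ with h0 | ⟨h1, hA⟩
      · exact Or.inl ⟨i, ⟨j, hlt⟩, by simpa using h0, rfl, rfl⟩
      · exact Or.inr (Or.inl ⟨i, ⟨j, hlt⟩, by simpa using h1, hA, rfl, rfl⟩)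
  termination_by j _ => d - j

lemma ov_bwd {n d : ℕ} (A : Fin n → Fin d → Bool) (i : Fin n) (f : Fin d → OVSym)
    (hf : ∀ k, f k = OVSym.zero ∨ f k = OVSym.one) :
    ∀ j (hj : j ≤ d),
      DBPath (ovEdge A) (OVNode.v i ⟨j, Nat.lt_succ_of_le hj⟩)
        ((List.ofFn f).drop j ++ [OVSym.hash]) OVNode.t →
      ∀ k : Fin d, j ≤ (k : ℕ) → f k = OVSym.one → A i k = false
  | j, hj, p, k, hk, hone => by
    rcases eq_or_lt_of_le hj with h | hlt
    · exact absurd (h ▸ hk : d ≤ (k:ℕ)) (Nat.not_le.mpr k.isLt)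
    · rw [List.drop_eq_getElem_cons (by simpa using hlt), List.cons_append] at p
      cases p with
      | cons e tail =>
        rcases e with ⟨i', j', hc, hx, hy⟩ | ⟨i', j', hc, hA, hx, hy⟩ |
            ⟨i', hc, hx, hy⟩ | ⟨i', hc, hx, hy⟩
        · -- zero edge
          injection hx with h1 hj'
          subst h1
          subst hy
          rcases eq_or_lt_of_le hk with hkj | hkj
          · exfalso
            have : f k = OVSym.zero := by
              have : k = ⟨j, hlt⟩ := Fin.ext hkj.symm
              rw [this]; simpa using hc
            rw [hone] at this; cases this
          · have hj'v : (j' : ℕ) = j := by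
              have := congrArg Fin.val hj'; simpa using this.symm
            have tail' : DBPath (ovEdge A) (OVNode.v i ⟨j+1, Nat.succ_lt_succ hlt⟩)
                ((List.ofFn f).drop (j+1) ++ [OVSym.hash]) OVNode.t := by
              have : j'.succ = (⟨j+1, Nat.succ_lt_succ hlt⟩ : Fin (d+1)) := by
                apply Fin.ext; simp [hj'v]
              rwa [this] at tail
            exact ov_bwd A i f hf (j+1) hlt tail' k hkj hone
        · -- one edge
          injection hx with h1 hj'
          subst h1
          subst hy
          have hj'v : (j' : ℕ) = j := by
            have := congrArg Fin.val hj'; simpa using this.symm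
          rcases eq_or_lt_of_le hk with hkj | hkj
          · have : j' = k := Fin.ext (by rw [hj'v, hkj])
            rwa [this] at hA
          · have tail' : DBPath (ovEdge A) (OVNode.v i ⟨j+1, Nat.succ_lt_succ hlt⟩)
                ((List.ofFn f).drop (j+1) ++ [OVSym.hash]) OVNode.t := by
              have : j'.succ = (⟨j+1, Nat.succ_lt_succ hlt⟩ : Fin (d+1)) := by
                apply Fin.ext; simp [hj'v]
              rwa [this] at tail
            exact ov_bwd A i f hf (j+1) hlt tail' k hkj hone
        · cases hx
        · exfalso
          have hc' : f ⟨j, hlt⟩ = OVSym.hash := by simpa using hc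
          rcases hf ⟨j, hlt⟩ with h | h <;> rw [h] at hc' <;> cases hc'
  termination_by j _ _ _ _ _ => d - j

/-- The OV-to-RPQ reduction: there are orthogonal vectors `a ∈ A`, `b ∈ B` iff
`(s, t) ∈ q(D)` with `q = #(w₁|…|w_n)#`, `w_i` the word of `bⁱ`. -/
theorem ov_reduction {n d : ℕ} (A B : Fin n → Fin d → Bool) :
    (∃ i j : Fin n, ∀ k : Fin d, ¬(A i k = true ∧ B j k = true)) ↔
      qEval (ovEdge A)
        (fun w => ∃ i : Fin n,
          w = OVSym.hash ::
            (List.ofFn fun k : Fin d => if B i k then OVSym.one else OVSym.zero) ++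
              [OVSym.hash])
        OVNode.s OVNode.t := by
  constructor
  · rintro ⟨i, j, horth⟩
    set f : Fin d → OVSym := fun k => if B j k then OVSym.one else OVSym.zero with hfdef
    refine ⟨OVSym.hash :: (List.ofFn f) ++ [OVSym.hash], ⟨j, rfl⟩, ?_⟩
    refine DBPath.cons (v := OVNode.v i 0)
      (Or.inr (Or.inr (Or.inl ⟨i, rfl, rfl, rfl⟩))) ?_
    have hbody := ov_fwd A i f (fun k => by
      by_cases hb : B j k
      · right
        refine ⟨by simp [hfdef, hb], ?_⟩
        have := horth k
        cases hA : A i k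
        · rfl
        · exact absurd ⟨hA, hb⟩ this
      · left; simp [hfdef, hb]) 0 (Nat.zero_le d)
    rw [List.drop_zero] at hbody
    have : (OVNode.v i (0 : Fin (d+1))) = OVNode.v i ⟨0, Nat.lt_succ_of_le (Nat.zero_le d)⟩ := rfl
    rw [this]
    exact DBPath.append hbody
      (DBPath.cons (Or.inr (Or.inr (Or.inr ⟨i, rfl, rfl, rfl⟩))) (DBPath.nil _))
  · rintro ⟨w, ⟨j, rfl⟩, p⟩
    rw [List.cons_append] at p
    cases p with
    | cons e tail =>
      rcases e with ⟨i', j', hc, hx, hy⟩ | ⟨i', j', hc, hA, hx, hy⟩ |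
          ⟨i', hc, hx, hy⟩ | ⟨i', hc, hx, hy⟩
      · cases hx
      · cases hx
      · subst hy
        set f : Fin d → OVSym := fun k => if B j k then OVSym.one else OVSym.zero with hfdef
        have hf : ∀ k, f k = OVSym.zero ∨ f k = OVSym.one := fun k => by
          by_cases hb : B j k <;> simp [hfdef, hb]
        have tail' : DBPath (ovEdge A) (OVNode.v i' ⟨0, Nat.lt_succ_of_le (Nat.zero_le d)⟩)
            ((List.ofFn f).drop 0 ++ [OVSym.hash]) OVNode.t := by
          rw [List.drop_zero]; exact tail
        have := ov_bwd A i' f hf 0 (Nat.zero_le d) tail'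
        refine ⟨i', j, fun k ⟨hA1, hB1⟩ => ?_⟩
        have : A i' k = false := this k (Nat.zero_le _) (by simp [hfdef, hB1])
        rw [hA1] at this; cases this
      · cases hx
end

section
/- Let G = (V,E) be an undirected graph with V = {v₁,…,v_n}. Define the graph database D over {a,#} with nodes s', t', s_j, t_j for j ∈ [n], and (u,i) for u ∈ V, 0 ≤ i ≤ 3; edges (u,i) →ᵃ (u',i+1) for 0 ≤ i ≤ 2 and {u,u'} ∈ E; edges s' →# s₁, s_i →ᵃ s_{i+1} and t_i →ᵃ t_{i+1} for 1 ≤ i ≤ n−1, t_n →# t'; and edges s_i →ᵃ (v_i,0) and (v_i,3) →ᵃ t_i for i ∈ [n]. Let q = # aⁿ⁺⁴ #. Then q(D) ≠ ∅ if and only if G contains a triangle. -/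
/-- The alphabet {a, #}. -/
inductive TSym : Type
  | a | hash

/-- Nodes of the triangle-detection graph database: `s'`, `t'`, `s_i`, `t_i` (indexed by
`Fin n`, representing `s₁,…,s_n`) and `(u, l)` for `u ∈ V`, `0 ≤ l ≤ 3`. -/
inductive TNode (n : ℕ) : Type
  | s' | t'
  | s (i : Fin n)
  | t (i : Fin n)
  | v (u : Fin n) (l : Fin 4)

/-- Edges of the triangle-detection graph database built from an undirected graph `G`. -/
def triEdge {n : ℕ} (G : SimpleGraph (Fin n)) : TNode n → TSym → TNode n → Prop :=
  fun x c y =>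
  (∃ (u u' : Fin n) (l : Fin 3), c = TSym.a ∧ G.Adj u u' ∧
      x = TNode.v u l.castSucc ∧ y = TNode.v u' l.succ) ∨
  (∃ i : Fin n, c = TSym.hash ∧ (i : ℕ) = 0 ∧ x = TNode.s' ∧ y = TNode.s i) ∨
  (∃ i j : Fin n, c = TSym.a ∧ (j : ℕ) = (i : ℕ) + 1 ∧ x = TNode.s i ∧ y = TNode.s j) ∨
  (∃ i j : Fin n, c = TSym.a ∧ (j : ℕ) = (i : ℕ) + 1 ∧ x = TNode.t i ∧ y = TNode.t j) ∨
  (∃ i : Fin n, c = TSym.hash ∧ (i : ℕ) = n - 1 ∧ x = TNode.t i ∧ y = TNode.t') ∨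
  (∃ i : Fin n, c = TSym.a ∧ x = TNode.s i ∧ y = TNode.v i 0) ∨
  (∃ i : Fin n, c = TSym.a ∧ x = TNode.v i 3 ∧ y = TNode.t i)

def Pv {n : ℕ} (G : SimpleGraph (Fin n)) (u : Fin n) : ℕ → ℕ → Prop
  | 0, k => ∃ a b c : Fin n, G.Adj u a ∧ G.Adj a b ∧ G.Adj b c ∧ (c:ℕ) + k = n + 3
  | 1, k => ∃ b c : Fin n, G.Adj u b ∧ G.Adj b c ∧ (c:ℕ) + k = n + 2
  | 2, k => ∃ c : Fin n, G.Adj u c ∧ (c:ℕ) + k = n + 1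
  | 3, k => (u:ℕ) + k = n
  | _+4, _ => True

def P {n : ℕ} (G : SimpleGraph (Fin n)) : TNode n → ℕ → Prop
  | TNode.s', k => k = 0
  | TNode.t', _ => False
  | TNode.s i, k => ∃ j a b c : Fin n,
      G.Adj j a ∧ G.Adj a b ∧ G.Adj b c ∧ (c:ℕ) + k + (i:ℕ) = n + 4 + (j:ℕ)
  | TNode.t i, k => (i:ℕ) + k + 1 = n
  | TNode.v u l, k => Pv G u l.val k

lemma key {n : ℕ} (G : SimpleGraph (Fin n)) :
    ∀ (k : ℕ) (x y : TNode n),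
    DBPath (triEdge G) x (List.replicate k TSym.a ++ [TSym.hash]) y → P G x k := by
  intro k
  induction k with
  | zero =>
    intro x y h
    simp only [List.replicate_zero, List.nil_append] at h
    cases h with
    | cons e tail =>
      rcases e with ⟨u,u',l,hc,_⟩ | ⟨i,hc,hi,hx,hy⟩ | ⟨i,j,hc,_⟩ | ⟨i,j,hc,_⟩ |
        ⟨i,hc,hi,hx,hy⟩ | ⟨i,hc,_⟩ | ⟨i,hc,_⟩
      · exact absurd hc (by simp)
      · subst hx; simp [P]
      · exact absurd hc (by simp)
      · exact absurd hc (by simp)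
      · subst hx; have := i.isLt; simp only [P]; omega
      · exact absurd hc (by simp)
      · exact absurd hc (by simp)
  | succ k ih =>
    intro x y h
    rw [List.replicate_succ, List.cons_append] at h
    cases h with
    | cons e tail =>
      rename_i x1
      have hp := ih x1 y tail
      rcases e with ⟨u,u',l,hc,hadj,hx,hy⟩ | ⟨i,hc,hi,hx,hy⟩ | ⟨i,j,hc,hj,hx,hy⟩ |
        ⟨i,j,hc,hj,hx,hy⟩ | ⟨i,hc,hi,hx,hy⟩ | ⟨i,hc,hx,hy⟩ | ⟨i,hc,hx,hy⟩
      · subst hx; subst hy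
        obtain ⟨lv, hlv⟩ := l
        simp only [P, Fin.coe_castSucc, Fin.val_succ] at hp ⊢
        interval_cases lv
        · simp only [Pv] at hp ⊢
          obtain ⟨b, c, h1, h2, h3⟩ := hp
          exact ⟨u', b, c, hadj, h1, h2, by omega⟩
        · simp only [Pv] at hp ⊢
          obtain ⟨c, h1, h2⟩ := hp
          exact ⟨u', c, hadj, h1, by omega⟩
        · simp only [Pv] at hp ⊢
          exact ⟨u', hadj, by omega⟩
      · exact absurd hc (by simp)
      · subst hx; subst hy
        obtain ⟨j', a, b, c, h1, h2, h3, h4⟩ := hp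
        exact ⟨j', a, b, c, h1, h2, h3, by omega⟩
      · subst hx; subst hy
        simp only [P] at hp ⊢; omega
      · exact absurd hc (by simp)
      · subst hx; subst hy
        simp only [P, Pv, Fin.val_zero] at hp ⊢
        obtain ⟨a, b, c, h1, h2, h3, h4⟩ := hp
        exact ⟨i, a, b, c, h1, h2, h3, by omega⟩
      · subst hx; subst hy
        simp only [P, Pv] at hp ⊢
        omega

lemma chainS {n : ℕ} (G : SimpleGraph (Fin n)) :
    ∀ (m i j : ℕ) (hi : i < n) (hj : j < n), i + m = j →
    DBPath (triEdge G) (TNode.s ⟨i, hi⟩) (List.replicate m TSym.a) (TNode.s ⟨j, hj⟩) := by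
  intro m
  induction m with
  | zero =>
    intro i j hi hj he
    obtain rfl : i = j := by omega
    exact DBPath.nil _
  | succ m ih =>
    intro i j hi hj he
    have hi1 : i + 1 < n := by omega
    refine DBPath.cons ?_ (ih (i+1) j hi1 hj (by omega))
    exact Or.inr (Or.inr (Or.inl ⟨⟨i, hi⟩, ⟨i+1, hi1⟩, rfl, rfl, rfl, rfl⟩))

lemma chainT {n : ℕ} (G : SimpleGraph (Fin n)) :
    ∀ (m i j : ℕ) (hi : i < n) (hj : j < n), i + m = j →
    DBPath (triEdge G) (TNode.t ⟨i, hi⟩) (List.replicate m TSym.a) (TNode.t ⟨j, hj⟩) := by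
  intro m
  induction m with
  | zero =>
    intro i j hi hj he
    obtain rfl : i = j := by omega
    exact DBPath.nil _
  | succ m ih =>
    intro i j hi hj he
    have hi1 : i + 1 < n := by omega
    refine DBPath.cons ?_ (ih (i+1) j hi1 hj (by omega))
    exact Or.inr (Or.inr (Or.inr (Or.inl ⟨⟨i, hi⟩, ⟨i+1, hi1⟩, rfl, rfl, rfl, rfl⟩)))

/-- Triangle-to-RPQ reduction: with `q = # a^{n+4} #`, `q(D) ≠ ∅` iff `G` has a triangle. -/
theorem triangle_reduction {n : ℕ} (G : SimpleGraph (Fin n)) :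
    (∃ u v : TNode n,
        qEval (triEdge G)
          (fun w => w = TSym.hash :: List.replicate (n + 4) TSym.a ++ [TSym.hash]) u v) ↔
      ∃ x y z : Fin n, G.Adj x y ∧ G.Adj y z ∧ G.Adj x z := by
  constructor
  · rintro ⟨u, v, w, rfl, hp⟩
    cases hp with
    | cons e tail =>
      rcases e with ⟨u0,u0',l,hc,_⟩ | ⟨i,hc,hi,hx,hy⟩ | ⟨i,j,hc,_⟩ | ⟨i,j,hc,_⟩ |
        ⟨i,hc,hi,hx,hy⟩ | ⟨i,hc,_⟩ | ⟨i,hc,_⟩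
      · exact absurd hc (by simp)
      · subst hy
        have hk := key G (n+4) _ _ tail
        obtain ⟨j, a, b, c, h1, h2, h3, h4⟩ := hk
        have hc : c = j := by ext; omega
        subst hc
        exact ⟨c, a, b, h1, h2, (h3.symm)⟩
      · exact absurd hc (by simp)
      · exact absurd hc (by simp)
      · subst hy
        exact absurd (key G (n+4) _ _ tail) (by simp [P])
      · exact absurd hc (by simp)
      · exact absurd hc (by simp)
  · rintro ⟨x, y, z, hxy, hyz, hxz⟩
    have hn : 0 < n := x.pos
    set m := n - 1 - x.val with hm
    refine ⟨TNode.s', TNode.t', _, rfl, ?_⟩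
    have hword : TSym.hash :: List.replicate (n + 4) TSym.a ++ [TSym.hash] =
        TSym.hash :: (List.replicate x.val TSym.a ++
          (TSym.a :: TSym.a :: TSym.a :: TSym.a :: TSym.a ::
            (List.replicate m TSym.a ++ [TSym.hash]))) := by
      rw [show n + 4 = x.val + (5 + m) by omega, List.replicate_add, List.replicate_add]
      simp [List.append_assoc, List.replicate]
    rw [hword]
    refine DBPath.cons (Or.inr (Or.inl ⟨⟨0, hn⟩, rfl, rfl, rfl, rfl⟩)) ?_
    refine DBPath.append (chainS G x.val 0 x.val hn x.isLt (by omega)) ?_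
    refine DBPath.cons (Or.inr (Or.inr (Or.inr (Or.inr (Or.inr (Or.inl
      ⟨⟨x.val, x.isLt⟩, rfl, rfl, rfl⟩)))))) ?_
    refine DBPath.cons (Or.inl ⟨x, y, 0, rfl, hxy, rfl, rfl⟩) ?_
    refine DBPath.cons (Or.inl ⟨y, z, 1, rfl, hyz, rfl, rfl⟩) ?_
    refine DBPath.cons (Or.inl ⟨z, x, 2, rfl, hxz.symm, rfl, rfl⟩) ?_
    refine DBPath.cons (Or.inr (Or.inr (Or.inr (Or.inr (Or.inr (Or.inr
      ⟨x, rfl, rfl, rfl⟩)))))) ?_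
    refine DBPath.append (chainT G m x.val (n-1) x.isLt (by omega) (by omega)) ?_
    refine DBPath.cons (Or.inr (Or.inr (Or.inr (Or.inr (Or.inl
      ⟨⟨n-1, by omega⟩, rfl, rfl, rfl, rfl⟩))))) (DBPath.nil _)
end

section
/- Let M be a Boolean n×n matrix and w a Boolean vector of dimension n. Define the graph database D over {a} with nodes {u_i, v_i : i ∈ [n]} ∪ {z}, edges u_i →ᵃ v_j whenever M[i,j] = 1, and edges v_j →ᵃ z whenever w[j] = 1. Let q = aa. Then q(D) = {(u_i, z) : (M·w)[i] = 1}, where M·w denotes the Boolean matrix-vector product. -/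
/-- Nodes of the matrix-vector graph database: `u_i`, `v_i` for `i ∈ [n]`, and `z`. -/
inductive MVNode (n : ℕ) : Type
  | u (i : Fin n)
  | v (i : Fin n)
  | z

/-- Edges of the matrix-vector graph database built from matrix `M` and vector `w`. -/
def mvEdge {n : ℕ} (M : Fin n → Fin n → Bool) (w : Fin n → Bool) :
    MVNode n → Unit → MVNode n → Prop := fun x _ y =>
  (∃ i j : Fin n, M i j = true ∧ x = MVNode.u i ∧ y = MVNode.v j) ∨
  (∃ j : Fin n, w j = true ∧ x = MVNode.v j ∧ y = MVNode.z)

namespace DBPath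

variable {V σ : Type*} {E : V → σ → V → Prop}

theorem nil_iff {u v : V} : DBPath E u [] v ↔ u = v := by
  constructor
  · rintro ⟨⟩
    rfl
  · rintro rfl
    exact .nil u

theorem cons_iff {u w : V} {a : σ} {l : List σ} :
    DBPath E u (a :: l) w ↔ ∃ v, E u a v ∧ DBPath E v l w := by
  constructor
  · rintro (_ | ⟨hedge, hpath⟩)
    exact ⟨_, hedge, hpath⟩
  · rintro ⟨v, hedge, hpath⟩
    exact .cons hedge hpath

theorem pair_iff {u w : V} {a b : σ} :
    DBPath E u [a, b] w ↔ ∃ v, E u a v ∧ E v b w := by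
  simp only [cons_iff, nil_iff, exists_eq_right]

end DBPath

theorem qEval_eq_word {V σ : Type*} (E : V → σ → V → Prop) (l : List σ) (u v : V) :
    qEval E (fun l' => l' = l) u v ↔ DBPath E u l v := by
  simp only [qEval, exists_eq_left]

theorem mvEdge_two_step_iff {n : ℕ} (M : Fin n → Fin n → Bool) (w : Fin n → Bool)
    (p r : MVNode n) :
    (∃ y, mvEdge M w p () y ∧ mvEdge M w y () r) ↔
      ∃ i : Fin n, p = MVNode.u i ∧ r = MVNode.z ∧ ∃ j, M i j = true ∧ w j = true := by
  cases p <;> cases r <;> simp [mvEdge]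

/-- With `q = aa`, `q(D) = {(u_i, z) : (M·w)[i] = 1}` (Boolean matrix-vector product). -/
theorem omv_reduction {n : ℕ} (M : Fin n → Fin n → Bool) (w : Fin n → Bool) :
    ∀ p r : MVNode n,
      qEval (mvEdge M w) (fun l => l = [(), ()]) p r ↔
        ∃ i : Fin n, p = MVNode.u i ∧ r = MVNode.z ∧ ∃ j, M i j = true ∧ w j = true := by
  intro p r
  rw [qEval_eq_word, DBPath.pair_iff, mvEdge_two_step_iff]
end

section
/- Let M be a Boolean n×n matrix and w a Boolean vector of dimension n, and let D be the graph database over {a} with nodes {u_i, v_i : i ∈ [n]} ∪ {z}, edges u_i →ᵃ v_j whenever M[i,j] = 1, and v_j →ᵃ z whenever w[j] = 1, with q = aa. Then a set A ⊆ q(D) is a q(D)-approximation if and only if A = q(D). -/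
/-- For the matrix-vector construction with `q = aa`, a subset `A ⊆ q(D)` is a
`q(D)`-approximation if and only if `A = q(D)`. -/
theorem approximation_is_full {n : ℕ} (M : Fin n → Fin n → Bool) (w : Fin n → Bool) :
    let Q : Set (MVNode n × MVNode n) :=
      {p | qEval (mvEdge M w) (fun l => l = [(), ()]) p.1 p.2}
    ∀ A : Set (MVNode n × MVNode n), A ⊆ Q →
      ((∀ p ∈ Q, (∃ v', (p.1, v') ∈ A) ∧ ∃ u', (u', p.2) ∈ A) ↔ A = Q) := by
  intro Q A hA
  have hz : ∀ p ∈ Q, p.2 = MVNode.z := by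
    rintro ⟨x, y⟩ ⟨l, hl, hp⟩
    subst hl
    rcases hp with _ | ⟨e1, hp⟩
    rcases hp with _ | ⟨e2, hp⟩
    cases hp
    rcases e2 with ⟨i, j, _, hm, hy⟩ | ⟨j, _, hm, hy⟩
    · rcases e1 with ⟨i', j', _, _, hm'⟩ | ⟨j', _, _, hm'⟩ <;>
        simp_all
    · exact hy
  constructor
  · intro h
    apply Set.Subset.antisymm hA
    rintro ⟨x, y⟩ hQ
    obtain ⟨⟨v', hv'⟩, _⟩ := h _ hQ
    have h1 := hz _ (hA hv')
    have h2 := hz _ hQ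
    simp only at h1 h2
    rw [h2, ← h1]
    exact hv'
  · rintro rfl p hp
    exact ⟨⟨p.2, hp⟩, ⟨p.1, hp⟩⟩
end

section
/- Let A and B be Boolean n×n matrices, viewed as the orthogonal-vectors instance where A has rows a₁,…,a_n and B has columns b₁,…,b_n. With D the graph database over {a} on nodes {(i,0),(i,1),(i,2) : i ∈ [n]} with edges (i,0) →ᵃ (j,1) for A[i,j]=1 and (i,1) →ᵃ (j,2) for B[i,j]=1, and q the query for paths labelled 'aa': |q(D)| = n² if and only if no row a_i of A is orthogonal to any column b_j of B. -/
/-- OV-to-Count reduction: with the three-layer graph built from `A` (rows) and `B`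
(columns) and `q = aa`, we have `|q(D)| = n²` iff no row of `A` is orthogonal to any
column of `B`. -/
theorem ov_counting_reduction {n : ℕ} (A B : Fin n → Fin n → Bool) :
    let E : Fin n × Fin 3 → Unit → Fin n × Fin 3 → Prop := fun x _ y =>
      (∃ i j : Fin n, A i j = true ∧ x = (i, 0) ∧ y = (j, 1)) ∨
      (∃ i j : Fin n, B i j = true ∧ x = (i, 1) ∧ y = (j, 2))
    ({p : (Fin n × Fin 3) × (Fin n × Fin 3) |
        qEval E (fun w => w = [(), ()]) p.1 p.2}.ncard = n ^ 2) ↔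
      ∀ i j : Fin n, ¬(∀ k : Fin n, ¬(A i k = true ∧ B k j = true)) := by
  intro E
  have hqev : ∀ u v, qEval E (fun w => w = [(), ()]) u v ↔
      ∃ i j : Fin n, (∃ k, A i k = true ∧ B k j = true) ∧ u = (i, 0) ∧ v = (j, 2) := by
    intro u v
    constructor
    · rintro ⟨w, hw, hp⟩
      subst hw
      rcases hp with _ | ⟨h1, hp⟩
      rcases hp with _ | ⟨h2, hp⟩
      cases hp
      rcases h1 with ⟨i, k, hA, hu, hm⟩ | ⟨i, k, hB, hu, hm⟩
      · rcases h2 with ⟨k', j, hA', hm', hv⟩ | ⟨k', j, hB', hm', hv⟩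
        · subst hm
          simp [Prod.ext_iff] at hm'
        · subst hm; subst hu
          obtain ⟨hv, rfl⟩ := hv
          have hk : k = k' := congrArg Prod.fst hm'
          exact ⟨i, j, ⟨k, hA, hk ▸ hB'⟩, rfl, rfl⟩
      · rcases h2 with ⟨k', j, _, hm', _⟩ | ⟨k', j, _, hm', _⟩ <;>
        · subst hm
          simp [Prod.ext_iff] at hm'
    · rintro ⟨i, j, ⟨k, hA, hB⟩, hu, hv⟩
      subst hu; subst hv
      exact ⟨[(), ()], rfl,
        .cons (Or.inl ⟨i, k, hA, rfl, rfl⟩) (.cons (Or.inr ⟨k, j, hB, rfl, rfl⟩) (.nil _))⟩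
  have hinj : Function.Injective
      (fun ij : Fin n × Fin n => (((ij.1, (0 : Fin 3)), (ij.2, (2 : Fin 3))) :
        (Fin n × Fin 3) × (Fin n × Fin 3))) := by
    intro a b h
    simp only [Prod.mk.injEq] at h
    exact Prod.ext h.1.1 h.2.1
  have hSeq : {p : (Fin n × Fin 3) × (Fin n × Fin 3) |
        qEval E (fun w => w = [(), ()]) p.1 p.2} =
      (fun ij : Fin n × Fin n => ((ij.1, (0 : Fin 3)), (ij.2, (2 : Fin 3)))) ''
        {ij : Fin n × Fin n | ∃ k, A ij.1 k = true ∧ B k ij.2 = true} := by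
    ext p
    simp only [Set.mem_setOf_eq, hqev, Set.mem_image, Set.mem_setOf_eq]
    constructor
    · rintro ⟨i, j, h, hu, hv⟩
      exact ⟨(i, j), h, by simp [Prod.ext_iff, hu, hv]⟩
    · rintro ⟨⟨i, j⟩, h, rfl⟩
      exact ⟨i, j, h, rfl, rfl⟩
  rw [hSeq, Set.ncard_image_of_injective _ hinj]
  have huniv : (Set.univ : Set (Fin n × Fin n)).ncard = n ^ 2 := by
    rw [Set.ncard_univ]
    simp [Nat.card_eq_fintype_card, sq]
  constructor
  · intro hcard i j
    have heq : {ij : Fin n × Fin n | ∃ k, A ij.1 k = true ∧ B k ij.2 = true} = Set.univ := by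
      apply Set.eq_of_subset_of_ncard_le (Set.subset_univ _)
      rw [huniv, hcard]
    have : (i, j) ∈ {ij : Fin n × Fin n | ∃ k, A ij.1 k = true ∧ B k ij.2 = true} := by
      rw [heq]; trivial
    obtain ⟨k, hk⟩ := this
    intro hall
    exact hall k hk
  · intro hall
    have heq : {ij : Fin n × Fin n | ∃ k, A ij.1 k = true ∧ B k ij.2 = true} = Set.univ := by
      ext ⟨i, j⟩
      simp only [Set.mem_setOf_eq, Set.mem_univ, iff_true]
      have := hall i j
      push_neg at this
      exact this
    rw [heq, huniv]
end
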